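/- Let σ ≥ 2, with frequencies f(c_0) = 1 and f(c_i) = F_i for 1 ≤ i ≤ σ-1 and code lengths |ρ(c_0)| = σ-1, |ρ(c_i)| = σ-i. Then the total encoded length ∑_{i=0}^{σ-1} f(c_i)·|ρ(c_i)| equals F_{σ+3} - 3. -/
import Mathlib

lemma fib_aux (m : ℕ) :
    m + 1 + ∑ i ∈ Finset.range (m + 1), Nat.fib (i + 1) * (m + 1 - i)
      = Nat.fib (m + 5) - 3 := by
  induction m with
  | zero => decide
  | succ m ih =>
    show m + 2 + ∑ i ∈ Finset.range (m + 2), Nat.fib (i + 1) * (m + 2 - i)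
      = Nat.fib (m + 6) - 3
    have hsplit : ∑ i ∈ Finset.range (m + 2), Nat.fib (i + 1) * (m + 2 - i)
        = (∑ i ∈ Finset.range (m + 1), Nat.fib (i + 1) * (m + 1 - i))
          + (∑ i ∈ Finset.range (m + 1), Nat.fib (i + 1)) + Nat.fib (m + 2) := by
      rw [Finset.sum_range_succ]
      have key : ∀ i ∈ Finset.range (m + 1),
          Nat.fib (i + 1) * (m + 2 - i)
            = Nat.fib (i + 1) * (m + 1 - i) + Nat.fib (i + 1) := by
        intro i hi
        have : i ≤ m := by simpa [Nat.lt_succ_iff] using hi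
        have h2 : m + 2 - i = (m + 1 - i) + 1 := by omega
        rw [h2, Nat.mul_succ]
      rw [Finset.sum_congr rfl key, Finset.sum_add_distrib]
      have : Nat.fib (m + 1 + 1) * (m + 2 - (m + 1)) = Nat.fib (m + 2) := by
        rw [show m + 2 - (m + 1) = 1 by omega, mul_one]
      omega
    have hsum : ∑ i ∈ Finset.range (m + 1), Nat.fib (i + 1)
        = Nat.fib (m + 3) - 1 := by
      have h := Nat.fib_succ_eq_succ_sum (m + 2)
      have h' : Nat.fib (m + 2 + 1) = Nat.fib (m + 3) := by norm_num
      have hh : ∑ k ∈ Finset.range (m + 2), Nat.fib k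
          = ∑ i ∈ Finset.range (m + 1), Nat.fib (i + 1) := by
        rw [Finset.sum_range_succ']
        simp
      omega
    have h1 : Nat.fib (m + 6) = Nat.fib (m + 5) + Nat.fib (m + 4) := by
      rw [show m + 6 = (m + 4) + 2 by ring, Nat.fib_add_two]; ring
    have h2 : Nat.fib (m + 4) = Nat.fib (m + 3) + Nat.fib (m + 2) := by
      rw [show m + 4 = (m + 2) + 2 by ring, Nat.fib_add_two]; ring
    have h3 : 3 ≤ Nat.fib (m + 5) := by
      calc 3 = Nat.fib 4 := rfl
      _ ≤ Nat.fib (m + 5) := Nat.fib_mono (by omega)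
    have h4 : 1 ≤ Nat.fib (m + 3) := Nat.fib_pos.2 (by omega)
    rw [hsplit, hsum]
    omega

theorem fib_total_encoded_length (σ : ℕ) (hσ : 2 ≤ σ)
    (f : ℕ → ℕ) (hf0 : f 0 = 1) (hf : ∀ i, 1 ≤ i → i ≤ σ - 1 → f i = Nat.fib i)
    (L : ℕ → ℕ) (hL0 : L 0 = σ - 1) (hL : ∀ i, 1 ≤ i → i ≤ σ - 1 → L i = σ - i) :
    ∑ i ∈ Finset.range σ, f i * L i = Nat.fib (σ + 3) - 3 := by
  obtain ⟨m, rfl⟩ : ∃ m, σ = m + 2 := ⟨σ - 2, by omega⟩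
  have key : ∑ i ∈ Finset.range (m + 2), f i * L i
      = m + 1 + ∑ i ∈ Finset.range (m + 1), Nat.fib (i + 1) * (m + 1 - i) := by
    rw [Finset.sum_range_succ']
    have : ∀ i ∈ Finset.range (m + 1),
        f (i + 1) * L (i + 1) = Nat.fib (i + 1) * (m + 1 - i) := by
      intro i hi
      have hi' : i ≤ m := by simpa [Nat.lt_succ_iff] using hi
      rw [hf (i + 1) (by omega) (by omega), hL (i + 1) (by omega) (by omega)]
      congr 1
      omega
    rw [Finset.sum_congr rfl this, hf0, hL0]
    omega
  rw [key, fib_aux]
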